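/- arXiv:2604.00373 — 3 statements merged into one kernel-verified Lean document; each statement's English description precedes it below -/
import Mathlib

section
/- The set of sorted normalized side-length triples of lattice triangles is dense in the moduli space of triangles: for every (a,b,c) ∈ ℝ³ with 0 < a ≤ b ≤ c < 1 and a + b + c = 2, and every ε > 0, there exists a triple of noncollinear points in ℤ² whose sorted normalized side-length triple lies within Euclidean distance ε of (a,b,c). -/
/-- The canonical embedding of `ℤ²` into the Euclidean plane. -/
noncomputable def latticePt (p : ℤ × ℤ) : EuclideanSpace ℝ (Fin 2) :=
  WithLp.toLp 2 ![(p.1 : ℝ), (p.2 : ℝ)]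

/-- The rearrangement of a triple of reals in nondecreasing order. -/
noncomputable def sort3 (u v w : ℝ) : ℝ × ℝ × ℝ :=
  (min u (min v w), u + v + w - min u (min v w) - max u (max v w),
    max u (max v w))

/-- The sorted normalized side-length triple of a triangle with vertices
`A, B, C`: the side lengths divided by the semi-perimeter, sorted in
nondecreasing order. -/
noncomputable def sortedNormTriple (A B C : EuclideanSpace ℝ (Fin 2)) :
    ℝ × ℝ × ℝ :=
  let s : ℝ := (‖B - A‖ + ‖C - B‖ + ‖A - C‖) / 2
  sort3 (‖B - A‖ / s) (‖C - B‖ / s) (‖A - C‖ / s)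

/-!
Every point of the moduli space is the shape of a triangle with vertices `0`, `(1, 0)` and an
apex `z` in the open upper half-plane, and this shape depends continuously on `z`. Apexes of
the form `(p / N, q / N)` are dense, and scaling by `N` turns such a triangle into a lattice
triangle of the same shape.
-/

open Filter Topology

lemma sort3_rotate (u v w : ℝ) : sort3 w u v = sort3 u v w := by
  simp only [sort3, Prod.mk.injEq]
  refine ⟨?_, ?_, ?_⟩
  · rw [min_left_comm, min_comm w]
  · rw [min_left_comm, min_comm w, max_left_comm, max_comm w]; ring
  · rw [max_left_comm, max_comm w]

lemma sort3_of_le {u v w : ℝ} (huv : u ≤ v) (hvw : v ≤ w) : sort3 u v w = (u, v, w) := by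
  simp only [sort3, min_eq_left hvw, min_eq_left huv, max_eq_right hvw,
    max_eq_right (huv.trans hvw)]
  congr 2
  ring

lemma sortedNormTriple_smul {r : ℝ} (hr : 0 < r) (A B C : EuclideanSpace ℝ (Fin 2)) :
    sortedNormTriple (r • A) (r • B) (r • C) = sortedNormTriple A B C := by
  have hnorm (X Y : EuclideanSpace ℝ (Fin 2)) : ‖r • X - r • Y‖ = r * ‖X - Y‖ := by
    rw [← smul_sub, norm_smul, Real.norm_of_nonneg hr.le]
  have hdiv (x y : ℝ) : r * x / ((r * y) / 2) = x / (y / 2) := by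
    rw [mul_div_assoc r y, mul_div_mul_left _ _ hr.ne']
  simp only [sortedNormTriple, hnorm, ← mul_add, hdiv]

lemma sortedNormTriple_eq_of_norm_eq {A B C : EuclideanSpace ℝ (Fin 2)} {a b c t : ℝ}
    (ht : 0 < t) (hab : a ≤ b) (hbc : b ≤ c) (hsum : a + b + c = 2)
    (hAB : ‖B - A‖ = t * c) (hBC : ‖C - B‖ = t * a) (hCA : ‖A - C‖ = t * b) :
    sortedNormTriple A B C = (a, b, c) := by
  have hs : (t * c + t * a + t * b) / 2 = t := by linear_combination t * hsum / 2
  simp only [sortedNormTriple, hAB, hBC, hCA, hs, mul_div_cancel_left₀ _ ht.ne']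
  rw [sort3_rotate, sort3_of_le hab hbc]

lemma continuous_sortedNormTriple_right {A B : EuclideanSpace ℝ (Fin 2)} (hAB : A ≠ B) :
    Continuous fun C => sortedNormTriple A B C := by
  have hpos : ∀ C : EuclideanSpace ℝ (Fin 2), (‖B - A‖ + ‖C - B‖ + ‖A - C‖) / 2 ≠ 0 := by
    intro C
    have : 0 < ‖B - A‖ := norm_pos_iff.2 (sub_ne_zero.2 hAB.symm)
    positivity
  simp only [sortedNormTriple, sort3]
  fun_prop (disch := exact hpos _)

lemma norm_toLp_fin_two (x y : ℝ) : ‖!₂[x, y]‖ = √(x ^ 2 + y ^ 2) := by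
  simp [EuclideanSpace.norm_eq, Fin.sum_univ_two]

lemma exists_apex_of_triangle_ineq {u v : ℝ} (h₁ : 1 < u + v) (h₂ : u < v + 1)
    (h₃ : v < u + 1) :
    ∃ x y : ℝ, 0 < y ∧ (x - 1) ^ 2 + y ^ 2 = u ^ 2 ∧ x ^ 2 + y ^ 2 = v ^ 2 := by
  set x := (1 + v ^ 2 - u ^ 2) / 2 with hx
  have hpos : 0 < v ^ 2 - x ^ 2 := by
    have heron :
        4 * (v ^ 2 - x ^ 2) = (u + v - 1) * (u - v + 1) * (v - u + 1) * (u + v + 1) := by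
      rw [hx]; ring
    have : 0 < (u + v - 1) * (u - v + 1) * (v - u + 1) * (u + v + 1) :=
      mul_pos (mul_pos (mul_pos (by linarith) (by linarith)) (by linarith)) (by linarith)
    linarith
  refine ⟨x, √(v ^ 2 - x ^ 2), Real.sqrt_pos.2 hpos, ?_, ?_⟩ <;>
    rw [Real.sq_sqrt hpos.le] <;> ring

noncomputable def unitBaseShape (z : ℝ × ℝ) : ℝ × ℝ × ℝ :=
  sortedNormTriple 0 !₂[1, 0] !₂[z.1, z.2]

lemma continuous_unitBaseShape : Continuous unitBaseShape := by
  have h0 : (0 : EuclideanSpace ℝ (Fin 2)) ≠ !₂[1, 0] := fun h => by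
    simpa using congrArg (· 0) h
  exact (continuous_sortedNormTriple_right h0).comp (by fun_prop)

lemma exists_unitBaseShape_eq {a b c : ℝ} (ha : 0 < a) (hab : a ≤ b) (hbc : b ≤ c)
    (hc : c < 1) (hsum : a + b + c = 2) :
    ∃ z : ℝ × ℝ, 0 < z.2 ∧ unitBaseShape z = (a, b, c) := by
  have hc0 : 0 < c := by linarith
  obtain ⟨x, y, hy, hxy₁, hxy₀⟩ := exists_apex_of_triangle_ineq (u := a / c) (v := b / c)
    (by rw [← add_div, one_lt_div hc0]; linarith) (by rw [div_lt_iff₀ hc0]; field_simp; linarith)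
    (by rw [div_lt_iff₀ hc0]; field_simp; linarith)
  refine ⟨(x, y), hy,
    sortedNormTriple_eq_of_norm_eq (t := c⁻¹) (inv_pos.2 hc0) hab hbc hsum ?_ ?_ ?_⟩
  · simp [norm_toLp_fin_two, hc0.ne']
  · rw [show !₂[x, y] - !₂[1, 0] = !₂[x - 1, y] by ext i; fin_cases i <;> simp,
      norm_toLp_fin_two, hxy₁, Real.sqrt_sq (div_nonneg ha.le hc0.le), inv_mul_eq_div]
  · rw [zero_sub, norm_neg, norm_toLp_fin_two, hxy₀,
      Real.sqrt_sq (div_nonneg (ha.le.trans hab) hc0.le), inv_mul_eq_div]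

lemma not_collinear_latticePt {N q : ℤ} (hN : N ≠ 0) (hq : q ≠ 0) (p : ℤ) :
    ¬ Collinear ℝ ({latticePt (0, 0), latticePt (N, 0), latticePt (p, q)} :
      Set (EuclideanSpace ℝ (Fin 2))) := by
  intro h
  have hne : latticePt (0, 0) ≠ latticePt (N, 0) := fun h =>
    hN (by simpa [latticePt, eq_comm] using congrArg (· 0) h)
  have hline := h.mem_affineSpan_of_mem_of_ne (p₁ := latticePt (0, 0)) (p₂ := latticePt (N, 0))
    (p₃ := latticePt (p, q)) (by simp) (by simp) (by simp) hne
  have hsub : line[ℝ, latticePt (0, 0), latticePt (N, 0)] ≤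
      (LinearMap.ker (EuclideanSpace.proj (1 : Fin 2) :
        EuclideanSpace ℝ (Fin 2) →L[ℝ] ℝ).toLinearMap).toAffineSubspace :=
    affineSpan_le.2 (by simp [Set.insert_subset_iff, latticePt])
  simpa [latticePt, hq] using hsub hline

lemma sortedNormTriple_latticePt {N : ℕ} (hN : 0 < N) (p q : ℤ) :
    sortedNormTriple (latticePt (0, 0)) (latticePt (N, 0)) (latticePt (p, q)) =
      unitBaseShape ((p : ℝ) / N, (q : ℝ) / N) := by
  have hN' : (0 : ℝ) < N := Nat.cast_pos.2 hN
  rw [unitBaseShape, ← sortedNormTriple_smul hN' 0]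
  congr 1 <;> ext i <;> fin_cases i <;> simp [latticePt, mul_div_cancel₀ _ hN'.ne']

def latticeTriangleShapes : Set (ℝ × ℝ × ℝ) :=
  {t | ∃ A B C : ℤ × ℤ,
    ¬ Collinear ℝ ({latticePt A, latticePt B, latticePt C} : Set (EuclideanSpace ℝ (Fin 2))) ∧
    sortedNormTriple (latticePt A) (latticePt B) (latticePt C) = t}

lemma dense_intPairs_div_nat :
    Dense {z : ℝ × ℝ | ∃ N : ℕ, 0 < N ∧ ∃ p q : ℤ, z = ((p : ℝ) / N, (q : ℝ) / N)} := by
  refine (Rat.denseRange_cast.prodMap Rat.denseRange_cast).mono ?_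
  rintro _ ⟨⟨r, s⟩, rfl⟩
  refine ⟨r.den * s.den, by positivity, r.num * s.den, s.num * r.den, ?_⟩
  simp only [Prod.map, Rat.cast_def]
  push_cast
  ext <;> field_simp

lemma unitBaseShape_mem_closure {z : ℝ × ℝ} (hz : 0 < z.2) :
    unitBaseShape z ∈ closure latticeTriangleShapes := by
  have hz' : z ∈ closure ({z : ℝ × ℝ | 0 < z.2} ∩
      {z | ∃ N : ℕ, 0 < N ∧ ∃ p q : ℤ, z = ((p : ℝ) / N, (q : ℝ) / N)}) :=
    dense_intPairs_div_nat.open_subset_closure_inter (isOpen_lt continuous_const continuous_snd) hz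
  refine map_mem_closure continuous_unitBaseShape hz' ?_
  rintro _ ⟨hq, N, hN, p, q, rfl⟩
  refine ⟨(0, 0), (N, 0), (p, q), not_collinear_latticePt (by positivity) ?_ p,
    sortedNormTriple_latticePt hN p q⟩
  rintro rfl
  simp at hq

/-- Density of lattice triangles in the moduli space of triangles: for every
`(a,b,c)` with `0 < a ≤ b ≤ c < 1` and `a + b + c = 2` and every `ε > 0`,
there is a triple of noncollinear lattice points whose sorted normalized
side-length triple is within Euclidean distance `ε` of `(a,b,c)`. -/
theorem stmt_0 (a b c : ℝ) (ha : 0 < a) (hab : a ≤ b) (hbc : b ≤ c)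
    (hc : c < 1) (hsum : a + b + c = 2) (ε : ℝ) (hε : 0 < ε) :
    ∃ A B C : ℤ × ℤ,
      ¬ Collinear ℝ ({latticePt A, latticePt B, latticePt C} :
          Set (EuclideanSpace ℝ (Fin 2))) ∧
      Real.sqrt (((sortedNormTriple (latticePt A) (latticePt B) (latticePt C)).1 - a) ^ 2 +
          ((sortedNormTriple (latticePt A) (latticePt B) (latticePt C)).2.1 - b) ^ 2 +
          ((sortedNormTriple (latticePt A) (latticePt B) (latticePt C)).2.2 - c) ^ 2) < ε := by
  obtain ⟨z, hz, hshape⟩ := exists_unitBaseShape_eq ha hab hbc hc hsum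
  have hclosure : (a, b, c) ∈ closure latticeTriangleShapes :=
    hshape ▸ unitBaseShape_mem_closure hz
  have hnear : ∀ᶠ t in 𝓝 (a, b, c),
      √((t.1 - a) ^ 2 + (t.2.1 - b) ^ 2 + (t.2.2 - c) ^ 2) < ε :=
    ((by fun_prop : Continuous fun t : ℝ × ℝ × ℝ =>
      √((t.1 - a) ^ 2 + (t.2.1 - b) ^ 2 + (t.2.2 - c) ^ 2)).tendsto (a, b, c)).eventually
      (gt_mem_nhds (by simpa using hε))
  obtain ⟨_, ⟨A, B, C, hABC, rfl⟩, hdist⟩ :=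
    ((mem_closure_iff_frequently.1 hclosure).and_eventually hnear).exists
  exact ⟨A, B, C, hABC, hdist⟩
end

section
/- The Lebesgue area of the planar region {(a,b) ∈ ℝ² : 0 < a < 1, 0 < b < 1, a + b > 1, (2 − a − b)² > a² + b²}, corresponding to obtuse triangles with obtuse angle opposite the side of normalized length c = 2 − a − b, equals 3/2 − 2·ln 2. -/
/-!
Since `(2 - a - b)² - a² - b² = 2 (2 - a) (2 - 2 / (2 - a) - b)`, the obtuse condition says
`b < 2 - 2 / (2 - a)`. For `0 < a < 1` this hyperbola runs between the line `b = 1 - a` and `b = 1`,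
so the region is the region between these two graphs over `0 < a < 1`, and its area is
`∫₀¹ (1 + x - 2 / (2 - x)) dx = 3/2 - 2 log 2`, the logarithm coming from `∫₀¹ dx / (2 - x) = log 2`.
-/

open MeasureTheory Set

lemma sq_two_sub_sub_gt_iff {a b : ℝ} (ha : a < 2) :
    (2 - a - b) ^ 2 > a ^ 2 + b ^ 2 ↔ b < 2 - 2 / (2 - a) := by
  have h2a : 0 < 2 - a := sub_pos.mpr ha
  rw [show (2 : ℝ) - 2 / (2 - a) = (2 * (2 - a) - 2) / (2 - a) by field_simp, lt_div_iff₀ h2a]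
  constructor <;> intro h <;> nlinarith

lemma two_sub_two_div_two_sub_lt_one {x : ℝ} (hx₀ : 0 < x) (hx₂ : x < 2) :
    2 - 2 / (2 - x) < 1 := by
  rw [sub_lt_comm, lt_div_iff₀ (by linarith)]
  linarith

lemma one_sub_le_two_sub_two_div_two_sub {x : ℝ} (hx₀ : 0 ≤ x) (hx₁ : x ≤ 1) :
    1 - x ≤ 2 - 2 / (2 - x) := by
  rw [le_sub_comm, div_le_iff₀ (by linarith)]
  nlinarith

lemma obtuse_region_eq_regionBetween :
    {p : ℝ × ℝ | 0 < p.1 ∧ p.1 < 1 ∧ 0 < p.2 ∧ p.2 < 1 ∧ p.1 + p.2 > 1 ∧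
        (2 - p.1 - p.2) ^ 2 > p.1 ^ 2 + p.2 ^ 2}
      = regionBetween (fun x => 1 - x) (fun x => 2 - 2 / (2 - x)) (Ioo 0 1) := by
  ext ⟨a, b⟩
  simp only [mem_ofPred_eq, regionBetween, mem_Ioo]
  constructor
  · rintro ⟨ha₀, ha₁, -, -, hab, hobtuse⟩
    exact ⟨⟨ha₀, ha₁⟩, by linarith, (sq_two_sub_sub_gt_iff (by linarith)).mp hobtuse⟩
  · rintro ⟨⟨ha₀, ha₁⟩, hlow, hhigh⟩
    have := two_sub_two_div_two_sub_lt_one ha₀ (by linarith)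
    refine ⟨ha₀, ha₁, by linarith, by linarith, by linarith, ?_⟩
    exact (sq_two_sub_sub_gt_iff (by linarith)).mpr hhigh

lemma continuousOn_two_sub_two_div_two_sub :
    ContinuousOn (fun x : ℝ => 2 - 2 / (2 - x)) (Iio 2) :=
  continuousOn_const.sub <| continuousOn_const.div (by fun_prop) fun _ hx =>
    (sub_pos.mpr (mem_Iio.mp hx)).ne'

lemma integral_obtuse_boundary_gap :
    ∫ x in (0 : ℝ)..1, ((2 - 2 / (2 - x)) - (1 - x)) = 3 / 2 - 2 * Real.log 2 := by
  have hderiv : ∀ x ∈ uIcc (0 : ℝ) 1,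
      HasDerivAt (fun x : ℝ => x + x ^ 2 / 2 + 2 * Real.log (2 - x))
        ((2 - 2 / (2 - x)) - (1 - x)) x := by
    intro x hx
    rw [uIcc_of_le zero_le_one] at hx
    have h2x : (2 : ℝ) - x ≠ 0 := by linarith [hx.2]
    refine (((hasDerivAt_id x).add ((hasDerivAt_pow 2 x).div_const 2)).add
      ((((hasDerivAt_id x).const_sub 2).log h2x).const_mul 2)).congr_deriv ?_
    simp only [id]
    field_simp
    ring
  have hcont : ContinuousOn (fun x : ℝ => (2 - 2 / (2 - x)) - (1 - x)) (uIcc 0 1) :=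
    (continuousOn_two_sub_two_div_two_sub.sub (by fun_prop)).mono fun x hx => by
      rw [uIcc_of_le zero_le_one] at hx
      exact mem_Iio.mpr (by linarith [hx.2])
  rw [intervalIntegral.integral_eq_sub_of_hasDerivAt hderiv hcont.intervalIntegrable]
  norm_num

/-- The Lebesgue area of the region of the Teichmüller space of triangles
corresponding to obtuse triangles with obtuse angle opposite the side of
normalized length `c = 2 - a - b` equals `3/2 - 2 ln 2`. -/
theorem stmt_10 :
    volume {p : ℝ × ℝ | 0 < p.1 ∧ p.1 < 1 ∧ 0 < p.2 ∧ p.2 < 1 ∧ p.1 + p.2 > 1 ∧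
        (2 - p.1 - p.2) ^ 2 > p.1 ^ 2 + p.2 ^ 2}
      = ENNReal.ofReal (3 / 2 - 2 * Real.log 2) := by
  have hIcc : Icc (0 : ℝ) 1 ⊆ Iio 2 := fun x hx => mem_Iio.mpr (by linarith [hx.2])
  have hlow : IntegrableOn (fun x : ℝ => 1 - x) (Ioo 0 1) :=
    (continuous_const.sub continuous_id).continuousOn.integrableOn_Icc.mono_set Ioo_subset_Icc_self
  have hhigh : IntegrableOn (fun x : ℝ => 2 - 2 / (2 - x)) (Ioo 0 1) :=
    (continuousOn_two_sub_two_div_two_sub.mono hIcc).integrableOn_Icc.mono_set Ioo_subset_Icc_self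
  rw [obtuse_region_eq_regionBetween, Measure.volume_eq_prod,
    volume_regionBetween_eq_integral hlow hhigh measurableSet_Ioo
      fun x hx => one_sub_le_two_sub_two_div_two_sub hx.1.le hx.2.le,
    ← integral_Ioc_eq_integral_Ioo, ← intervalIntegral.integral_of_le zero_le_one]
  exact congrArg ENNReal.ofReal integral_obtuse_boundary_gap
end

section
/- The Lebesgue area of the subset of T = {(a,b) ∈ ℝ² : 0 < a < 1, 0 < b < 1, a + b > 1} consisting of those (a,b) for which, with c = 2 − a − b, at least one of c² > a² + b², b² > a² + c², a² > b² + c² holds (i.e., the locus of obtuse triangles), equals 9/2 − 6·ln 2. -/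
/-!
The map `(a, b) ↦ (b, c)` permutes the three sides cyclically; it is a shear followed by a
reflection, so it preserves area, and it preserves `T`. Hence the loci of triangles obtuse at
`c`, at `a` and at `b` are preimages of one another, and they are pairwise disjoint because a
triangle has at most one obtuse angle. The locus obtuse at `c` is the region
`1 - a < b < (2 - 2a)/(2 - a)` over `0 < a < 1`, of area `∫₀¹ a(1 - a)/(2 - a) da = 3/2 - 2 log 2`.
-/

open MeasureTheory Set

def triangleSpace : Set (ℝ × ℝ) :=
  {p | 0 < p.1 ∧ p.1 < 1 ∧ 0 < p.2 ∧ p.2 < 1 ∧ 1 < p.1 + p.2}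

def obtuseAtThirdSide : Set (ℝ × ℝ) :=
  {p | p ∈ triangleSpace ∧ p.1 ^ 2 + p.2 ^ 2 < (2 - p.1 - p.2) ^ 2}

def sideRotate (p : ℝ × ℝ) : ℝ × ℝ := (p.2, 2 - p.1 - p.2)

theorem measurePreserving_sideRotate : MeasurePreserving sideRotate := by
  have shear : MeasurePreserving (fun z : ℝ × ℝ => (z.2, z.2 + z.1)) :=
    Measure.volume_eq_prod ℝ ℝ ▸ measurePreserving_prod_add_swap volume volume
  have reflect : MeasurePreserving (Prod.map (id : ℝ → ℝ) fun t : ℝ => 2 - t) :=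
    Measure.volume_eq_prod ℝ ℝ ▸
      (MeasurePreserving.id volume).prod (Measure.measurePreserving_sub_left volume 2)
  convert reflect.comp shear using 1
  ext p <;> simp only [sideRotate, Function.comp_apply, Prod.map_apply, id_eq]
  ring

theorem sideRotate_mem_triangleSpace_iff {p : ℝ × ℝ} :
    sideRotate p ∈ triangleSpace ↔ p ∈ triangleSpace := by
  simp only [triangleSpace, sideRotate, mem_ofPred_eq]
  constructor <;> rintro ⟨h₁, h₂, h₃, h₄, h₅⟩ <;> refine ⟨?_, ?_, ?_, ?_, ?_⟩ <;> linarith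

theorem obtuseAtThirdSide_eq_regionBetween :
    obtuseAtThirdSide =
      regionBetween (fun a => 1 - a) (fun a => (2 - 2 * a) / (2 - a)) (Ioo 0 1) := by
  ext ⟨a, b⟩
  simp only [obtuseAtThirdSide, triangleSpace, regionBetween, mem_ofPred_eq, mem_Ioo]
  constructor
  · rintro ⟨⟨ha₀, ha₁, -, -, hab⟩, hobtuse⟩
    refine ⟨⟨ha₀, ha₁⟩, by linarith, ?_⟩
    rw [lt_div_iff₀ (by linarith)]
    nlinarith
  · rintro ⟨⟨ha₀, ha₁⟩, hlow, hhigh⟩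
    rw [lt_div_iff₀ (by linarith)] at hhigh
    exact ⟨⟨ha₀, ha₁, by linarith, by nlinarith, by linarith⟩, by nlinarith⟩

theorem measurableSet_obtuseAtThirdSide : MeasurableSet obtuseAtThirdSide := by
  rw [obtuseAtThirdSide_eq_regionBetween]
  exact measurableSet_regionBetween (by fun_prop) (by fun_prop) measurableSet_Ioo

theorem integral_fiberLength_obtuseAtThirdSide :
    ∫ a in (0 : ℝ)..1, ((2 - 2 * a) / (2 - a) - (1 - a)) = 3 / 2 - 2 * Real.log 2 := by
  have hpos : ∀ a ∈ uIcc (0 : ℝ) 1, 2 - a ≠ 0 := by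
    intro a ha
    rw [uIcc_of_le zero_le_one] at ha
    linarith [ha.2]
  have hderiv : ∀ a ∈ uIcc (0 : ℝ) 1,
      HasDerivAt (fun a => a ^ 2 / 2 + a + 2 * Real.log (2 - a))
        ((2 - 2 * a) / (2 - a) - (1 - a)) a := by
    intro a ha
    refine ((((hasDerivAt_pow 2 a).div_const 2).add (hasDerivAt_id' a)).add
      ((((hasDerivAt_id' a).const_sub 2).log (hpos a ha)).const_mul 2)).congr_deriv ?_
    field_simp [hpos a ha]
    ring
  rw [intervalIntegral.integral_eq_sub_of_hasDerivAt hderiv]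
  · norm_num
  · refine ContinuousOn.intervalIntegrable ?_
    exact ((continuousOn_const.sub (continuousOn_const.mul continuousOn_id)).div
      (continuousOn_const.sub continuousOn_id) hpos).sub (continuousOn_const.sub continuousOn_id)

theorem volume_obtuseAtThirdSide :
    volume obtuseAtThirdSide = ENNReal.ofReal (3 / 2 - 2 * Real.log 2) := by
  have hden : ∀ a ∈ Icc (0 : ℝ) 1, 2 - a ≠ 0 := fun a ha => by linarith [ha.2]
  rw [obtuseAtThirdSide_eq_regionBetween, Measure.volume_eq_prod,
    volume_regionBetween_eq_integral, ← integral_Ioc_eq_integral_Ioo,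
    ← intervalIntegral.integral_of_le zero_le_one, ← integral_fiberLength_obtuseAtThirdSide]
  · rfl
  · exact (continuousOn_const.sub continuousOn_id).integrableOn_Icc.mono_set Ioo_subset_Icc_self
  · exact ((continuousOn_const.sub (continuousOn_const.mul continuousOn_id)).div
      (continuousOn_const.sub continuousOn_id) hden).integrableOn_Icc.mono_set Ioo_subset_Icc_self
  · exact measurableSet_Ioo
  · rintro a ⟨ha₀, ha₁⟩
    rw [le_div_iff₀ (by linarith)]
    nlinarith

theorem disjoint_obtuseAtThirdSide_preimage_sideRotate :
    Disjoint obtuseAtThirdSide (sideRotate ⁻¹' obtuseAtThirdSide) := by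
  rw [disjoint_left]
  rintro ⟨a, b⟩ ⟨-, hc⟩ ⟨-, ha⟩
  simp only [sideRotate] at ha
  nlinarith [sq_nonneg b]

theorem disjoint_obtuseAtThirdSide_preimage_sideRotate_sideRotate :
    Disjoint obtuseAtThirdSide (sideRotate ⁻¹' (sideRotate ⁻¹' obtuseAtThirdSide)) := by
  rw [disjoint_left]
  rintro ⟨a, b⟩ ⟨-, hc⟩ ⟨-, hb⟩
  simp only [sideRotate] at hb
  nlinarith [sq_nonneg a]

theorem obtuseLocus_eq_union :
    {p : ℝ × ℝ | (0 < p.1 ∧ p.1 < 1 ∧ 0 < p.2 ∧ p.2 < 1 ∧ p.1 + p.2 > 1) ∧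
        ((2 - p.1 - p.2) ^ 2 > p.1 ^ 2 + p.2 ^ 2 ∨
         p.2 ^ 2 > p.1 ^ 2 + (2 - p.1 - p.2) ^ 2 ∨
         p.1 ^ 2 > p.2 ^ 2 + (2 - p.1 - p.2) ^ 2)} =
      obtuseAtThirdSide ∪ sideRotate ⁻¹' obtuseAtThirdSide ∪
        sideRotate ⁻¹' (sideRotate ⁻¹' obtuseAtThirdSide) := by
  ext p
  simp only [obtuseAtThirdSide, mem_union, mem_preimage, mem_ofPred_eq,
    sideRotate_mem_triangleSpace_iff]
  simp only [sideRotate, triangleSpace, mem_ofPred_eq]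
  constructor
  · rintro ⟨hT, hc | hb | ha⟩
    · exact Or.inl (Or.inl ⟨hT, hc⟩)
    · exact Or.inr ⟨hT, by linarith⟩
    · exact Or.inl (Or.inr ⟨hT, by linarith⟩)
  · rintro ((⟨hT, hc⟩ | ⟨hT, ha⟩) | ⟨hT, hb⟩)
    · exact ⟨hT, Or.inl hc⟩
    · exact ⟨hT, Or.inr (Or.inr (by linarith))⟩
    · exact ⟨hT, Or.inr (Or.inl (by linarith))⟩

/-- The Lebesgue area of the obtuse locus in the Teichmüller space of triangles
(in the coordinates `(a,b)` with `c = 2 - a - b`) equals `9/2 - 6 ln 2`. -/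
theorem stmt_12 :
    volume {p : ℝ × ℝ | (0 < p.1 ∧ p.1 < 1 ∧ 0 < p.2 ∧ p.2 < 1 ∧ p.1 + p.2 > 1) ∧
        ((2 - p.1 - p.2) ^ 2 > p.1 ^ 2 + p.2 ^ 2 ∨
         p.2 ^ 2 > p.1 ^ 2 + (2 - p.1 - p.2) ^ 2 ∨
         p.1 ^ 2 > p.2 ^ 2 + (2 - p.1 - p.2) ^ 2)}
      = ENNReal.ofReal (9 / 2 - 6 * Real.log 2) := by
  have hρ := measurePreserving_sideRotate
  have hO := measurableSet_obtuseAtThirdSide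
  have hdisj := disjoint_obtuseAtThirdSide_preimage_sideRotate
  have hpos : 0 ≤ 3 / 2 - 2 * Real.log 2 := by linarith [Real.log_two_lt_d9]
  rw [obtuseLocus_eq_union,
    measure_union (disjoint_obtuseAtThirdSide_preimage_sideRotate_sideRotate.union_left
      (hdisj.preimage sideRotate)) (hO.preimage hρ.measurable |>.preimage hρ.measurable),
    measure_union hdisj (hO.preimage hρ.measurable),
    hρ.measure_preimage (hO.preimage hρ.measurable).nullMeasurableSet,
    hρ.measure_preimage hO.nullMeasurableSet, volume_obtuseAtThirdSide,
    ← ENNReal.ofReal_add hpos hpos, ← ENNReal.ofReal_add (by positivity) hpos]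
  congr 1
  ring
end
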